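/- Let S = M_{d_1}(ℂ) ⊕ ⋯ ⊕ M_{d_k}(ℂ). If P = x^i_{pq} y^{rs}_{uv} or P = y^{rs}_{uv} x^i_{pq}, with i, p, q, r, s, u, v arbitrary admissible indices (r ≠ s, (p,q) ≠ (1,1)), then the associated double bracket ⟨⟨−,−⟩⟩_P is identically zero. Likewise, if P = y^{rs}_{pq} y^{vw}_{tu} with r ≠ s, v ≠ w, arbitrary admissible p, q, t, u, and with s ≠ v or w ≠ r, then ⟨⟨−,−⟩⟩_P is identically zero. -/

import Mathlib

open TensorProduct

set_option synthInstance.maxHeartbeats 1000000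
set_option maxHeartbeats 1000000

noncomputable section

/-- The finite dimensional semisimple algebra `S = M_{d 0}(ℂ) ⊕ ⋯ ⊕ M_{d (k-1)}(ℂ)`. -/
abbrev MatS (k : ℕ) (d : Fin k → ℕ) : Type :=
  ∀ i : Fin k, Matrix (Fin (d i)) (Fin (d i)) ℂ

variable (k : ℕ) (d : Fin k → ℕ)

/-- `θ` is a double derivation for the outer bimodule structure on `S ⊗ S`. -/
def IsDD (θ : MatS k d →ₗ[ℂ] MatS k d ⊗[ℂ] MatS k d) : Prop :=
  ∀ a b : MatS k d,
    θ (a * b) = (a ⊗ₜ[ℂ] (1 : MatS k d)) * θ b + θ a * ((1 : MatS k d) ⊗ₜ[ℂ] b)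

/-- The space of double derivations `DDer(S)`. -/
def DDer : Submodule ℂ (MatS k d →ₗ[ℂ] MatS k d ⊗[ℂ] MatS k d) where
  carrier := {θ | IsDD k d θ}
  add_mem' := by
    intro θ η hθ hη a b
    simp only [LinearMap.add_apply, hθ a b, hη a b, mul_add, add_mul]
    abel
  zero_mem' := by intro a b; simp
  smul_mem' := by
    intro c θ hθ a b
    simp only [LinearMap.smul_apply, hθ a b, smul_add, mul_smul_comm, smul_mul_assoc]

/-- The map `u ↦ (1 ⊗ s) * u * (t ⊗ 1)`, realizing the inner bimodule action
`(s·θ·t)(u) = θ(u)' t ⊗ s θ(u)''` after composition with `θ`. -/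
def innerMap (s t : MatS k d) : MatS k d ⊗[ℂ] MatS k d →ₗ[ℂ] MatS k d ⊗[ℂ] MatS k d :=
  (LinearMap.mulRight ℂ (t ⊗ₜ[ℂ] (1 : MatS k d))).comp
    (LinearMap.mulLeft ℂ ((1 : MatS k d) ⊗ₜ[ℂ] s))

lemma innerMap_isDD (s t : MatS k d) (θ : MatS k d →ₗ[ℂ] MatS k d ⊗[ℂ] MatS k d)
    (hθ : IsDD k d θ) : IsDD k d ((innerMap k d s t).comp θ) := by
  intro a b
  have h1 : ((1 : MatS k d) ⊗ₜ[ℂ] s) * (a ⊗ₜ[ℂ] (1 : MatS k d))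
      = (a ⊗ₜ[ℂ] (1 : MatS k d)) * ((1 : MatS k d) ⊗ₜ[ℂ] s) := by
    simp [Algebra.TensorProduct.tmul_mul_tmul]
  have h2 : ((1 : MatS k d) ⊗ₜ[ℂ] b) * (t ⊗ₜ[ℂ] (1 : MatS k d))
      = (t ⊗ₜ[ℂ] (1 : MatS k d)) * ((1 : MatS k d) ⊗ₜ[ℂ] b) := by
    simp [Algebra.TensorProduct.tmul_mul_tmul]
  simp only [LinearMap.comp_apply, hθ a b, innerMap, LinearMap.mulLeft_apply,
    LinearMap.mulRight_apply, mul_add, add_mul]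
  congr 1
  · simp only [mul_assoc]
    rw [← mul_assoc, h1, mul_assoc]
  · simp only [mul_assoc]
    rw [h2]

/-- The inner `S`-bimodule action on `DDer(S)`:  `(s·θ·t)(u) = θ(u)' t ⊗ s θ(u)''`. -/
def innerDD (s t : MatS k d) (θ : DDer k d) : DDer k d :=
  ⟨(innerMap k d s t).comp θ.1, innerMap_isDD k d s t θ.1 θ.2⟩

/-- The matrix unit `e^i_{pq}` of `S`. -/
def E (i : Fin k) (p q : Fin (d i)) : MatS k d :=
  Pi.single i (Matrix.single p q 1)

/-- The inner double derivation `d_x(y) = x (1 ⊗ y) - (y ⊗ 1) x`. -/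
def dIn (x : MatS k d ⊗[ℂ] MatS k d) : MatS k d →ₗ[ℂ] MatS k d ⊗[ℂ] MatS k d :=
  (LinearMap.mulLeft ℂ x).comp (TensorProduct.mk ℂ (MatS k d) (MatS k d) 1)
    - (LinearMap.mulRight ℂ x).comp ((TensorProduct.mk ℂ (MatS k d) (MatS k d)).flip 1)

lemma dIn_isDD (x : MatS k d ⊗[ℂ] MatS k d) : IsDD k d (dIn k d x) := by
  intro a b
  simp only [dIn, LinearMap.sub_apply, LinearMap.comp_apply, TensorProduct.mk_apply,
    LinearMap.flip_apply, LinearMap.mulLeft_apply, LinearMap.mulRight_apply, mul_sub, sub_mul]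
  have h1 : ((1 : MatS k d) ⊗ₜ[ℂ] (a * b)) = ((1 : MatS k d) ⊗ₜ[ℂ] a) * ((1 : MatS k d) ⊗ₜ[ℂ] b) := by
    simp [Algebra.TensorProduct.tmul_mul_tmul]
  have h2 : ((a * b) ⊗ₜ[ℂ] (1 : MatS k d)) = (a ⊗ₜ[ℂ] (1 : MatS k d)) * (b ⊗ₜ[ℂ] (1 : MatS k d)) := by
    simp [Algebra.TensorProduct.tmul_mul_tmul]
  have h3 : (a ⊗ₜ[ℂ] (1 : MatS k d)) * ((1 : MatS k d) ⊗ₜ[ℂ] b) = a ⊗ₜ[ℂ] b := by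
    simp [Algebra.TensorProduct.tmul_mul_tmul]
  have h4 : ((1 : MatS k d) ⊗ₜ[ℂ] a) * (b ⊗ₜ[ℂ] (1 : MatS k d)) = b ⊗ₜ[ℂ] a := by
    simp [Algebra.TensorProduct.tmul_mul_tmul]
  rw [h1, h2]
  simp only [mul_assoc]
  abel


/-- Auxiliary bilinear map `(x, y) ↦ (w ↦ (1 ⊗ x) * w * (y ⊗ 1))`, used to multiply Sweedler
components:  on pure tensors it sends `(x ⊗ y, u ⊗ v)` to `(u y) ⊗ (x v)`. -/
def mixAux (k : ℕ) (d : Fin k → ℕ) :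
    MatS k d →ₗ[ℂ] MatS k d →ₗ[ℂ]
      (MatS k d ⊗[ℂ] MatS k d →ₗ[ℂ] MatS k d ⊗[ℂ] MatS k d) :=
  LinearMap.mk₂ ℂ
    (fun x y => (LinearMap.mulRight ℂ (y ⊗ₜ[ℂ] (1 : MatS k d))).comp
      (LinearMap.mulLeft ℂ ((1 : MatS k d) ⊗ₜ[ℂ] x)))
    (fun x x' y => by
      ext w
      simp [TensorProduct.tmul_add, add_mul])
    (fun c x y => by
      ext w
      simp [TensorProduct.tmul_smul, smul_mul_assoc])
    (fun x y y' => by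
      ext w
      simp [TensorProduct.add_tmul, mul_add])
    (fun c x y => by
      ext w
      simp [TensorProduct.smul_tmul', mul_smul_comm])

/-- `mixer z w` is, for `z = x ⊗ y` and `w = u ⊗ v`, the element `(u y) ⊗ (x v)`. -/
def mixer (k : ℕ) (d : Fin k → ℕ) :
    MatS k d ⊗[ℂ] MatS k d →ₗ[ℂ]
      (MatS k d ⊗[ℂ] MatS k d →ₗ[ℂ] MatS k d ⊗[ℂ] MatS k d) :=
  TensorProduct.lift (mixAux k d)

/-- The double bracket associated to an ordered monomial `P = θ η` of double derivations:
`⟨⟨x,y⟩⟩_P = η(y)′ θ(x)″ ⊗ θ(x)′ η(y)″ − θ(y)′ η(x)″ ⊗ η(x)′ θ(y)″`. -/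
def bracketP (k : ℕ) (d : Fin k → ℕ)
    (θ η : MatS k d →ₗ[ℂ] MatS k d ⊗[ℂ] MatS k d) (x y : MatS k d) :
    MatS k d ⊗[ℂ] MatS k d :=
  mixer k d (θ x) (η y) - mixer k d (η x) (θ y)

/-- The double bracket `⟨⟨−,−⟩⟩_P` of `P = θ η` as a bilinear map. -/
def bracketOf (k : ℕ) (d : Fin k → ℕ)
    (θ η : MatS k d →ₗ[ℂ] MatS k d ⊗[ℂ] MatS k d) :
    MatS k d →ₗ[ℂ] MatS k d →ₗ[ℂ] MatS k d ⊗[ℂ] MatS k d :=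
  LinearMap.mk₂ ℂ (fun x y => bracketP k d θ η x y)
    (fun x x' y => by simp only [bracketP, map_add, LinearMap.add_apply]; abel)
    (fun c x y => by simp only [bracketP, map_smul, LinearMap.smul_apply, smul_sub])
    (fun x y y' => by simp only [bracketP, map_add]; abel)
    (fun c x y => by simp only [bracketP, map_smul, smul_sub])

/-- `σ(x ⊗ y ⊗ z) = z ⊗ x ⊗ y` on `S ⊗ S ⊗ S`. -/
def sigma3 (k : ℕ) (d : Fin k → ℕ) :
    (MatS k d ⊗[ℂ] MatS k d) ⊗[ℂ] MatS k d →ₗ[ℂ]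
      (MatS k d ⊗[ℂ] MatS k d) ⊗[ℂ] MatS k d :=
  (TensorProduct.assoc ℂ (MatS k d) (MatS k d) (MatS k d)).symm.toLinearMap.comp
    (TensorProduct.comm ℂ (MatS k d ⊗[ℂ] MatS k d) (MatS k d)).toLinearMap

/-- The double Jacobi identity
`⟨⟨a,⟨⟨b,c⟩⟩⟩⟩_L + σ(⟨⟨b,⟨⟨c,a⟩⟩⟩⟩_L) + σ²(⟨⟨c,⟨⟨a,b⟩⟩⟩⟩_L) = 0`,
where `⟨⟨a, u ⊗ v⟩⟩_L = ⟨⟨a, u⟩⟩ ⊗ v`. -/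
def DoubleJacobi (k : ℕ) (d : Fin k → ℕ)
    (B : MatS k d →ₗ[ℂ] MatS k d →ₗ[ℂ] MatS k d ⊗[ℂ] MatS k d) : Prop :=
  ∀ a b c : MatS k d,
    TensorProduct.map (B a) LinearMap.id (B b c)
      + sigma3 k d (TensorProduct.map (B b) LinearMap.id (B c a))
      + sigma3 k d (sigma3 k d (TensorProduct.map (B c) LinearMap.id (B a b))) = 0

/-- The index `1` (first row/column index) in `Fin (d i)`. -/
def o (k : ℕ) (d : Fin k → ℕ) (hd : ∀ i, 0 < d i) (i : Fin k) : Fin (d i) := ⟨0, hd i⟩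

/-- The double derivation `y^{pq}_{ab} = d_{e^p_{a1} ⊗ e^q_{1b}}`. -/
def yy (k : ℕ) (d : Fin k → ℕ) (hd : ∀ i, 0 < d i) (p q : Fin k)
    (a : Fin (d p)) (b : Fin (d q)) : MatS k d →ₗ[ℂ] MatS k d ⊗[ℂ] MatS k d :=
  dIn k d (E k d p a (o k d hd p) ⊗ₜ[ℂ] E k d q (o k d hd q) b)

/-- The double derivation `x^i_{pq} = d_{e^i_{p1} ⊗ e^i_{1q}}`. -/
def xx (k : ℕ) (d : Fin k → ℕ) (hd : ∀ i, 0 < d i) (i : Fin k)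
    (p q : Fin (d i)) : MatS k d →ₗ[ℂ] MatS k d ⊗[ℂ] MatS k d :=
  dIn k d (E k d i p (o k d hd i) ⊗ₜ[ℂ] E k d i (o k d hd i) q)


/-! Since `d_{a⊗b}(x) = a ⊗ bx − xa ⊗ b`, every term of `⟨⟨x,y⟩⟩_P` for `P = d_{a⊗b} d_{c⊗e}`
contains both products `cb` and `ae` as factors. For the monomials in question `a, b, c, e` are
matrix units, and the index conditions force one of these products to join two different simple
summands of `S`, where it is zero. -/

lemma mixer_tmul_tmul (x y u v : MatS k d) :
    mixer k d (x ⊗ₜ[ℂ] y) (u ⊗ₜ[ℂ] v) = (u * y) ⊗ₜ[ℂ] (x * v) := by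
  simp [mixer, mixAux, Algebra.TensorProduct.tmul_mul_tmul]

lemma dIn_tmul_apply (a b u : MatS k d) :
    dIn k d (a ⊗ₜ[ℂ] b) u = a ⊗ₜ[ℂ] (b * u) - (u * a) ⊗ₜ[ℂ] b := by
  simp [dIn, Algebra.TensorProduct.tmul_mul_tmul]

lemma mixer_dIn_tmul_eq_zero (a b c e x y : MatS k d) (h : c * b = 0 ∨ a * e = 0) :
    mixer k d (dIn k d (a ⊗ₜ[ℂ] b) x) (dIn k d (c ⊗ₜ[ℂ] e) y) = 0 := by
  simp only [dIn_tmul_apply, map_sub, LinearMap.sub_apply, mixer_tmul_tmul]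
  rcases h with h | h
  · have hx : c * (b * x) = 0 := by rw [← mul_assoc, h, zero_mul]
    simp [mul_assoc, h, hx]
  · have hy : a * (e * y) = 0 := by rw [← mul_assoc, h, zero_mul]
    simp [mul_assoc, h, hy]

lemma bracketP_dIn_tmul_eq_zero (a b c e x y : MatS k d) (h : c * b = 0 ∨ a * e = 0) :
    bracketP k d (dIn k d (a ⊗ₜ[ℂ] b)) (dIn k d (c ⊗ₜ[ℂ] e)) x y = 0 := by
  rw [bracketP, mixer_dIn_tmul_eq_zero k d a b c e x y h,
    mixer_dIn_tmul_eq_zero k d c e a b x y h.symm, sub_zero]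

lemma E_mul_E_of_ne {i j : Fin k} (hij : i ≠ j) (p q : Fin (d i)) (r s : Fin (d j)) :
    E k d i p q * E k d j r s = 0 := by
  rw [E, ← Pi.single_mul_left, E, Pi.single_eq_of_ne hij, mul_zero, Pi.single_zero]

lemma bracketP_dIn_E_eq_zero {i j l m : Fin k} (p₁ q₁ : Fin (d i)) (p₂ q₂ : Fin (d j))
    (p₃ q₃ : Fin (d l)) (p₄ q₄ : Fin (d m)) (h : j ≠ l ∨ m ≠ i) (x y : MatS k d) :
    bracketP k d (dIn k d (E k d i p₁ q₁ ⊗ₜ[ℂ] E k d j p₂ q₂))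
      (dIn k d (E k d l p₃ q₃ ⊗ₜ[ℂ] E k d m p₄ q₄)) x y = 0 :=
  bracketP_dIn_tmul_eq_zero k d _ _ _ _ x y
    (h.imp (fun h ↦ E_mul_E_of_ne k d (Ne.symm h) _ _ _ _)
      (fun h ↦ E_mul_E_of_ne k d (Ne.symm h) _ _ _ _))

/-- The double brackets associated to the degree-two monomials
`x^i_{pq} y^{rs}_{uv}`, `y^{rs}_{uv} x^i_{pq}` (any admissible indices) and
`y^{rs}_{pq} y^{vw}_{tu}` with `s ≠ v` or `w ≠ r` vanish identically. -/
theorem mixed_monomials_give_zero_bracket (k : ℕ) (d : Fin k → ℕ) (hd : ∀ i, 0 < d i) :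
    (∀ (i : Fin k) (p q : Fin (d i)) (r s : Fin k) (u : Fin (d r)) (v : Fin (d s)),
      r ≠ s → ¬(p = o k d hd i ∧ q = o k d hd i) →
      ∀ x y : MatS k d,
        bracketP k d (xx k d hd i p q) (yy k d hd r s u v) x y = 0) ∧
    (∀ (i : Fin k) (p q : Fin (d i)) (r s : Fin k) (u : Fin (d r)) (v : Fin (d s)),
      r ≠ s → ¬(p = o k d hd i ∧ q = o k d hd i) →
      ∀ x y : MatS k d,
        bracketP k d (yy k d hd r s u v) (xx k d hd i p q) x y = 0) ∧
    (∀ (r s v w : Fin k) (p : Fin (d r)) (q : Fin (d s)) (t : Fin (d v)) (u : Fin (d w)),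
      r ≠ s → v ≠ w → (s ≠ v ∨ w ≠ r) →
      ∀ x y : MatS k d,
        bracketP k d (yy k d hd r s p q) (yy k d hd v w t u) x y = 0) := by
  refine ⟨?_, ?_, ?_⟩
  · intro i p q r s u v hrs _ x y
    exact bracketP_dIn_E_eq_zero k d _ _ _ _ _ _ _ _ ((hrs.ne_or_ne i).imp Ne.symm id) x y
  · intro i p q r s u v hrs _ x y
    exact bracketP_dIn_E_eq_zero k d _ _ _ _ _ _ _ _ ((hrs.ne_or_ne i).symm.imp id Ne.symm) x y
  · intro r s v w p q t u _ _ hsvwr x y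
    exact bracketP_dIn_E_eq_zero k d _ _ _ _ _ _ _ _ hsvwr x y

end
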